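/- arXiv:1111.5472 — 5 statements merged into one kernel-verified Lean document; each statement's English description precedes it below -/
import Mathlib

section
/- Let M be an ε-differentially private mechanism and suppose player i's privacy utility Up_i satisfies the privacy-value assumption with bound F_i. Then for any types θ_i, θ_i' and profile θ_{-i}, |E[Up_i(θ_i, M(θ_i,θ_{-i}), M, θ_{-i})] − E[Up_i(θ_i, M(θ_i',θ_{-i}), M, θ_{-i})]| ≤ 2·F_i(e^ε)·SD(M(θ_i,θ_{-i}), M(θ_i',θ_{-i})). -/
/-!
Differential privacy bounds every likelihood ratio of outputs by `e^ε`, so by the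
privacy-value assumption and monotonicity of `F` the privacy utility is bounded pointwise by
`F(e^ε)`. The expectations of a function bounded by `B` under two output distributions differ
by at most `B · ∑ₒ |p o - q o| = 2 B · SD(p, q)`.
-/

open Finset

/-- Probability that the mechanism `M` outputs `o` on report profile `θ`. -/
noncomputable def outProb {Θ O R : Type*} [Fintype R] [DecidableEq O] {n : ℕ}
    (M : (Fin n → Θ) → R → O) (μ : R → ℝ) (θ : Fin n → Θ) (o : O) : ℝ :=
  ∑ r ∈ univ.filter (fun r => M θ r = o), μ r

lemma outProb_nonneg {Θ O R : Type*} [Fintype R] [DecidableEq O] {n : ℕ}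
    (M : (Fin n → Θ) → R → O) {μ : R → ℝ} (hμ0 : ∀ r, 0 ≤ μ r)
    (θ : Fin n → Θ) (o : O) : 0 ≤ outProb M μ θ o :=
  sum_nonneg fun r _ => hμ0 r

lemma sum_mul_comp_eq_sum_outProb_mul {Θ O R : Type*} [Fintype R] [Fintype O] [DecidableEq O]
    {n : ℕ} (M : (Fin n → Θ) → R → O) (μ : R → ℝ) (θ : Fin n → Θ) (g : O → ℝ) :
    ∑ r, μ r * g (M θ r) = ∑ o, outProb M μ θ o * g o := by
  rw [← sum_fiberwise univ (M θ) (fun r => μ r * g (M θ r))]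
  refine sum_congr rfl fun o _ => ?_
  rw [outProb, sum_mul]
  refine sum_congr rfl fun r hr => ?_
  rw [(mem_filter.mp hr).2]

/-- Junk values make this hold without side conditions: `x / 0 = 0` and an empty `⨆`
over `ℝ` is `0`, both below `c`. -/
lemma iSup_iSup_div_le_of_le_mul {ι : Sort*} {f : ι → ℝ} {c : ℝ} (hf : ∀ t, 0 ≤ f t)
    (hc : 0 ≤ c) (hratio : ∀ t t', f t ≤ c * f t') :
    ⨆ t, ⨆ t', f t / f t' ≤ c :=
  Real.iSup_le (fun t => Real.iSup_le (fun t' => div_le_of_le_mul₀ (hf t') hc (hratio t t')) hc) hc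

lemma abs_sum_mul_sub_sum_mul_le {ι : Type*} (s : Finset ι) (p q g : ι → ℝ) {B : ℝ}
    (hg : ∀ o ∈ s, |g o| ≤ B) :
    |∑ o ∈ s, p o * g o - ∑ o ∈ s, q o * g o| ≤ B * ∑ o ∈ s, |p o - q o| := by
  rw [← sum_sub_distrib, mul_sum]
  refine (abs_sum_le_sum_abs _ _).trans (sum_le_sum fun o ho => ?_)
  rw [← sub_mul, abs_mul, mul_comm]
  exact mul_le_mul_of_nonneg_right (hg o ho) (abs_nonneg _)

theorem stmt4_general {Θ O R : Type*} [Fintype R] [Fintype O]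
    [DecidableEq O] [DecidableEq Θ] {n : ℕ}
    (M : (Fin n → Θ) → R → O) (μ : R → ℝ)
    (hμ0 : ∀ r, 0 ≤ μ r)
    (ε : ℝ)
    (i : Fin n)
    (Up : Θ → O → (Fin n → Θ) → ℝ)   -- Up i (θ_i, o, M, θ_{-i})
    (F : ℝ → ℝ) (hFmono : Monotone F)
    (hAssum : ∀ (θi : Θ) (o : O) (θ : Fin n → Θ),
      |Up θi o θ| ≤ F (⨆ t : Θ, ⨆ t' : Θ,
        outProb M μ (Function.update θ i t) o / outProb M μ (Function.update θ i t') o))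
    (hDP : ∀ (θ : Fin n → Θ) (o : O) (t t' : Θ),
      outProb M μ (Function.update θ i t) o
        ≤ Real.exp ε * outProb M μ (Function.update θ i t') o)
    (θi θi' : Θ) (θ : Fin n → Θ) :
    |(∑ r, μ r * Up θi (M (Function.update θ i θi) r) θ) -
     (∑ r, μ r * Up θi (M (Function.update θ i θi') r) θ)|
      ≤ 2 * F (Real.exp ε) *
        ((1 / 2) * ∑ o : O,
          |outProb M μ (Function.update θ i θi) o -
           outProb M μ (Function.update θ i θi') o|) := by
  have hUp : ∀ o ∈ univ, |Up θi o θ| ≤ F (Real.exp ε) := fun o _ =>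
    (hAssum θi o θ).trans <| hFmono <|
      iSup_iSup_div_le_of_le_mul (fun _ => outProb_nonneg M hμ0 _ o) (Real.exp_pos ε).le
        (hDP θ o)
  rw [sum_mul_comp_eq_sum_outProb_mul M μ _ (Up θi · θ),
    sum_mul_comp_eq_sum_outProb_mul M μ _ (Up θi · θ)]
  calc _ ≤ F (Real.exp ε) * ∑ o, |outProb M μ (Function.update θ i θi) o -
          outProb M μ (Function.update θ i θi') o| :=
        abs_sum_mul_sub_sum_mul_le _ _ _ _ hUp
    _ = _ := by ring

/-- For an ε-differentially private `M` whose privacy utility `Up_i`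
satisfies the privacy-value assumption with bound `F_i`, the expected privacy
utilities under reports `θ_i` and `θ_i'` differ by at most
`2·F_i(e^ε)·SD(M(θ_i,θ_{-i}), M(θ_i',θ_{-i}))`. -/
theorem stmt4 {Θ O R : Type*} [Fintype R] [Fintype O] [Fintype Θ] [Nonempty Θ]
    [DecidableEq O] [DecidableEq Θ] {n : ℕ}
    (M : (Fin n → Θ) → R → O) (μ : R → ℝ)
    (hμ0 : ∀ r, 0 ≤ μ r) (hμ1 : ∑ r, μ r = 1)
    (ε : ℝ) (hε : 0 ≤ ε)
    (i : Fin n)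
    (Up : Θ → O → (Fin n → Θ) → ℝ)   -- Up i (θ_i, o, M, θ_{-i})
    (F : ℝ → ℝ) (hFmono : Monotone F)
    (hAssum : ∀ (θi : Θ) (o : O) (θ : Fin n → Θ),
      |Up θi o θ| ≤ F (⨆ t : Θ, ⨆ t' : Θ,
        outProb M μ (Function.update θ i t) o / outProb M μ (Function.update θ i t') o))
    (hDP : ∀ (θ : Fin n → Θ) (o : O) (t t' : Θ),
      outProb M μ (Function.update θ i t) o
        ≤ Real.exp ε * outProb M μ (Function.update θ i t') o)
    (θi θi' : Θ) (θ : Fin n → Θ) :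
    |(∑ r, μ r * Up θi (M (Function.update θ i θi) r) θ) -
     (∑ r, μ r * Up θi (M (Function.update θ i θi') r) θ)|
      ≤ 2 * F (Real.exp ε) *
        ((1 / 2) * ∑ o : O,
          |outProb M μ (Function.update θ i θi) o -
           outProb M μ (Function.update θ i θi') o|) :=
  stmt4_general M μ hμ0 ε i Up F hFmono hAssum hDP θi θi' θ
end

section
/- For the noisy majority election mechanism with noise Pr[r=k] ∝ exp(−ε|k|) on ℤ, for any profile θ and any Δ ≥ 1, the probability that the number of voters whose preferred candidate wins is at most max_{o'∈{A,B}} #{i : θ_i=o'} − Δ is strictly less than e^{−εΔ}. -/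
open Finset

def countA {n : ℕ} (θ : Fin n → Bool) : ℤ := (univ.filter (fun j => θ j = true)).card

def countB {n : ℕ} (θ : Fin n → Bool) : ℤ := (univ.filter (fun j => θ j = false)).card

/-- The noisy majority election mechanism: output A (`true`) iff `#A − #B ≥ r`. -/
def elect {n : ℕ} (θ : Fin n → Bool) (r : ℤ) : Bool := decide (countA θ - countB θ ≥ r)

/-- Number of voters whose preferred candidate is `o`. -/
def satisfied {n : ℕ} (θ : Fin n → Bool) (o : Bool) : ℤ :=
  (univ.filter (fun j => θ j = o)).card

/-- The two-sided discrete Laplace pmf on ℤ: `Pr[r=k] = e^{−ε|k|}(1−e^{−ε})/(1+e^{−ε})`. -/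
noncomputable def lapPMF (ε : ℝ) (k : ℤ) : ℝ :=
  Real.exp (-ε * |(k : ℝ)|) * (1 - Real.exp (-ε)) / (1 + Real.exp (-ε))

/-
Let `d = #A − #B`. If `d ≥ 0`, the event can only happen when the noise overturns the majority,
which forces `r > d`, and it also needs `d ≥ Δ`; so it lies in the tail `{r ≥ Δ}`. Symmetrically,
if `d < 0` it lies in `{r ≤ −Δ}`. A one-sided tail of the discrete Laplace distribution is a
geometric series: `Pr[r ≥ m] = e^{−εm} / (1 + e^{−ε}) < e^{−εm}` for `m ≥ 0`.
-/

section DiscreteLaplace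

variable {ε : ℝ}

lemma lapPMF_nonneg (hε : 0 ≤ ε) (k : ℤ) : 0 ≤ lapPMF ε k := by
  have hq : Real.exp (-ε) ≤ 1 := Real.exp_le_one_iff.mpr (by linarith)
  exact div_nonneg (mul_nonneg (Real.exp_pos _).le (by linarith)) (by positivity)

lemma lapPMF_neg (ε : ℝ) (k : ℤ) : lapPMF ε (-k) = lapPMF ε k := by
  simp [lapPMF, abs_neg]

lemma hasSum_indicator_Ici_lapPMF (hε : 0 < ε) {m : ℤ} (hm : 0 ≤ m) :
    HasSum ((Set.Ici m).indicator (lapPMF ε)) (Real.exp (-(ε * m)) / (1 + Real.exp (-ε))) := by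
  set q := Real.exp (-ε)
  have hq0 : 0 < q := Real.exp_pos _
  have hq1 : q < 1 := Real.exp_lt_one_iff.mpr (by linarith)
  set C := Real.exp (-(ε * m)) * ((1 - q) / (1 + q)) with hC
  have hshift : Function.Injective (fun j : ℕ => m + j) := fun a b h => by simpa using h
  have hrange : ∀ k ∉ Set.range (fun j : ℕ => m + j), (Set.Ici m).indicator (lapPMF ε) k = 0 := by
    intro k hk
    refine Set.indicator_of_notMem (fun hmk => hk ⟨(k - m).toNat, ?_⟩) _
    simp only [Set.mem_Ici] at hmk
    change m + ((k - m).toNat : ℤ) = k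
    omega
  have hterm : ∀ j : ℕ, (Set.Ici m).indicator (lapPMF ε) (m + j) = C * q ^ j := by
    intro j
    have habs : |((m + j : ℤ) : ℝ)| = m + j := by push_cast; exact abs_of_nonneg (by positivity)
    rw [Set.indicator_of_mem (by simp : m + (j : ℤ) ∈ Set.Ici m), lapPMF, habs, ← Real.exp_nat_mul,
      show -ε * ((m : ℝ) + j) = -(ε * m) + j * -ε by ring, Real.exp_add]
    ring
  have hvalue : Real.exp (-(ε * m)) / (1 + q) = C * (1 - q)⁻¹ := by
    have : (1 : ℝ) - q ≠ 0 := by linarith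
    have : (1 : ℝ) + q ≠ 0 := by linarith
    rw [hC]
    field_simp
  rw [← hshift.hasSum_iff hrange, Function.comp_def, funext hterm, hvalue]
  exact (hasSum_geometric_of_lt_one hq0.le hq1).mul_left C

lemma tsum_indicator_lapPMF_lt_of_subset_Ici (hε : 0 < ε) {m : ℤ} (hm : 0 ≤ m) {S : Set ℤ}
    (hS : S ⊆ Set.Ici m) : ∑' k, S.indicator (lapPMF ε) k < Real.exp (-(ε * m)) := by
  have htail := hasSum_indicator_Ici_lapPMF hε hm
  have hle : S.indicator (lapPMF ε) ≤ (Set.Ici m).indicator (lapPMF ε) :=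
    Set.indicator_le_indicator_of_subset hS (lapPMF_nonneg hε.le)
  have hS_summable : Summable (S.indicator (lapPMF ε)) :=
    htail.summable.of_nonneg_of_le (Set.indicator_nonneg fun k _ => lapPMF_nonneg hε.le k) hle
  calc ∑' k, S.indicator (lapPMF ε) k
      ≤ Real.exp (-(ε * m)) / (1 + Real.exp (-ε)) :=
        htail.tsum_eq ▸ hS_summable.tsum_mono htail.summable hle
    _ < Real.exp (-(ε * m)) :=
        div_lt_self (Real.exp_pos _) (lt_add_of_pos_right 1 (Real.exp_pos _))

lemma tsum_indicator_lapPMF_lt_of_subset_Iic (hε : 0 < ε) {m : ℤ} (hm : 0 ≤ m) {S : Set ℤ}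
    (hS : S ⊆ Set.Iic (-m)) : ∑' k, S.indicator (lapPMF ε) k < Real.exp (-(ε * m)) := by
  have hflip : (fun k => S.indicator (lapPMF ε) (-k)) = (-S).indicator (lapPMF ε) := by
    funext k
    by_cases hk : -k ∈ S <;> simp [hk, lapPMF_neg]
  rw [← (Equiv.neg ℤ).tsum_eq, Equiv.neg_apply, hflip]
  refine tsum_indicator_lapPMF_lt_of_subset_Ici hε hm fun k hk => ?_
  have := hS (Set.mem_neg.mp hk)
  simp only [Set.mem_Iic, Set.mem_Ici] at this ⊢
  omega

end DiscreteLaplace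

section Election

variable {n : ℕ} {θ : Fin n → Bool} {k Δ : ℤ}

lemma satisfied_elect :
    satisfied θ (elect θ k) = if k ≤ countA θ - countB θ then countA θ else countB θ := by
  unfold elect
  split_ifs with hk
  · rw [decide_eq_true hk]; rfl
  · rw [decide_eq_false hk]; rfl

lemma le_of_satisfied_elect_le (hΔ : 1 ≤ Δ) (hBA : countB θ ≤ countA θ)
    (h : satisfied θ (elect θ k) ≤ max (satisfied θ true) (satisfied θ false) - Δ) : Δ ≤ k := by
  change _ ≤ max (countA θ) (countB θ) - Δ at h
  rw [satisfied_elect] at h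
  split_ifs at h <;> omega

lemma le_neg_of_satisfied_elect_le (hΔ : 1 ≤ Δ) (hAB : countA θ < countB θ)
    (h : satisfied θ (elect θ k) ≤ max (satisfied θ true) (satisfied θ false) - Δ) : k ≤ -Δ := by
  change _ ≤ max (countA θ) (countB θ) - Δ at h
  rw [satisfied_elect] at h
  split_ifs at h <;> omega

end Election

/-- for the noisy majority election mechanism, for any profile θ and
any Δ ≥ 1, the probability that the number of voters whose preferred candidate wins
is at most `max_{o'} #{i : θ_i = o'} − Δ` is strictly less than `e^{−εΔ}`. -/
theorem stmt8 {n : ℕ} (ε : ℝ) (hε : 0 < ε) (θ : Fin n → Bool) (Δ : ℤ) (hΔ : 1 ≤ Δ) :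
    (∑' k : ℤ,
        if satisfied θ (elect θ k) ≤ max (satisfied θ true) (satisfied θ false) - Δ
        then lapPMF ε k else 0)
      < Real.exp (-(ε * Δ)) := by
  set E := {k : ℤ | satisfied θ (elect θ k) ≤ max (satisfied θ true) (satisfied θ false) - Δ}
  have hE : ∀ k : ℤ, (if satisfied θ (elect θ k) ≤ max (satisfied θ true) (satisfied θ false) - Δ
      then lapPMF ε k else 0) = E.indicator (lapPMF ε) k := fun k =>
    (Set.indicator_apply E _ k).symm
  simp_rw [hE]
  rcases le_or_gt (countB θ) (countA θ) with hBA | hAB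
  · exact tsum_indicator_lapPMF_lt_of_subset_Ici hε (by omega) fun k hk =>
      le_of_satisfied_elect_le hΔ hBA hk
  · exact tsum_indicator_lapPMF_lt_of_subset_Iic hε (by omega) fun k hk =>
      le_neg_of_satisfied_elect_le hΔ hAB hk
end

section
/- The noisy-histogram median mechanism for discrete facility location is ε-differentially private: for any two report profiles differing in one player's report, and any output location ℓ_j, the probabilities of outputting ℓ_j differ by a factor of at most e^ε. -/
/-!
Shifting the noise vector by a unit vector scales its probability by exactly `e^{-ε/2}`.
Hence adding one report at `c` raises the probability of output `j` by at most `e^{ε/2}`: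
absorb the report into the noise at `c`. It also lowers it by at most `e^{ε/2}`: one more unit
of noise at the current median `j`, together with the new report, leaves the median at `j`.
Changing a report is removing one and adding one, which costs `e^{ε/2} · e^{ε/2} = e^ε`.
-/

open Finset

/-- `Med z` is the minimum `k` with `Σ_{i≤k} z_i ≥ Σ_{i>k} z_i` (the set of such `k`
is always nonempty since `k` maximal works). -/
def Med {q : ℕ} (z : Fin (q + 1) → ℕ) : Fin (q + 1) :=
  if h : (univ.filter (fun k : Fin (q + 1) =>
      ∑ i ∈ univ.filter (fun i => i ≤ k), z i ≥ ∑ i ∈ univ.filter (fun i => k < i), z i)).Nonempty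
  then (univ.filter (fun k : Fin (q + 1) =>
      ∑ i ∈ univ.filter (fun i => i ≤ k), z i ≥ ∑ i ∈ univ.filter (fun i => k < i), z i)).min' h
  else 0

/-- Histogram of reported types. -/
def hist {n q : ℕ} (θ : Fin n → Fin (q + 1)) : Fin (q + 1) → ℕ :=
  fun j => (univ.filter (fun i => θ i = j)).card

/-- Geometric-type noise pmf on ℕ: `Pr[r=k] = (1−e^{−ε/2})·e^{−εk/2}`. -/
noncomputable def geoPMF (ε : ℝ) (k : ℕ) : ℝ :=
  (1 - Real.exp (-ε / 2)) * Real.exp (-ε * k / 2)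

/-- Product pmf of independent geometric noises. -/
noncomputable def noisePMF {q : ℕ} (ε : ℝ) (r : Fin (q + 1) → ℕ) : ℝ :=
  ∏ j, geoPMF ε (r j)

section Median

variable {q : ℕ}

def IsBalancedAt (z : Fin (q + 1) → ℕ) (k : Fin (q + 1)) : Prop :=
  ∑ i ∈ Ioi k, z i ≤ ∑ i ∈ Iic k, z i

lemma med_eq_iff {z : Fin (q + 1) → ℕ} {j : Fin (q + 1)} :
    Med z = j ↔ IsBalancedAt z j ∧ ∀ k < j, ¬ IsBalancedAt z k := by
  classical
  have hset : univ.filter (fun k : Fin (q + 1) =>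
      ∑ i ∈ univ.filter (fun i => i ≤ k), z i ≥ ∑ i ∈ univ.filter (fun i => k < i), z i)
      = univ.filter (IsBalancedAt z) := by
    ext k
    simp [IsBalancedAt, filter_ge_eq_Iic, filter_lt_eq_Ioi]
  have hlast : IsBalancedAt z (Fin.last q) := by
    simp [IsBalancedAt, Ioi_eq_empty.mpr fun b _ => Fin.le_last b]
  have hne : (univ.filter (IsBalancedAt z)).Nonempty :=
    ⟨_, mem_filter.mpr ⟨mem_univ _, hlast⟩⟩
  unfold Med
  simp only [hset, dif_pos hne, min'_eq_iff, mem_filter, mem_univ, true_and]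
  exact and_congr_right fun _ => ⟨fun h k hk hbal => (h k hbal).not_gt hk,
    fun h k hbal => not_lt.mp fun hk => h k hk hbal⟩

lemma sum_add_single_add_single (z : Fin (q + 1) → ℕ) (c j : Fin (q + 1))
    (s : Finset (Fin (q + 1))) :
    ∑ i ∈ s, (z + Pi.single c 1 + Pi.single j 1 : Fin (q + 1) → ℕ) i
      = ∑ i ∈ s, z i + (if c ∈ s then 1 else 0) + (if j ∈ s then 1 else 0) := by
  simp only [Pi.add_apply, sum_add_distrib, sum_pi_single']

/-- One extra unit at the median and one anywhere else cannot move the median: the unit at the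
median keeps it balanced, and below it the imbalance exceeds the one unit that may land there. -/
lemma med_add_single_add_single_med (z : Fin (q + 1) → ℕ) (c : Fin (q + 1)) :
    Med (z + Pi.single c 1 + Pi.single (Med z) 1) = Med z := by
  obtain ⟨hbal, hmin⟩ := med_eq_iff.mp (rfl : Med z = Med z)
  refine med_eq_iff.mpr ⟨?_, fun k hk hbal' => hmin k hk ?_⟩
  · unfold IsBalancedAt at hbal ⊢
    rw [sum_add_single_add_single, sum_add_single_add_single]
    simp only [mem_Ioi, mem_Iic, lt_irrefl, le_refl, if_true, if_false]
    split_ifs <;> omega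
  · unfold IsBalancedAt at hbal' ⊢
    rw [sum_add_single_add_single, sum_add_single_add_single] at hbal'
    simp only [mem_Ioi, mem_Iic, hk, if_true, not_le.mpr hk, if_false] at hbal'
    split_ifs at hbal' <;> omega

end Median

lemma summable_prod_apply_of_nonneg {α : Type*} {m : ℕ} {f : Fin m → α → ℝ}
    (hf0 : ∀ j a, 0 ≤ f j a) (hf : ∀ j, Summable (f j)) :
    Summable fun r : Fin m → α => ∏ j, f j (r j) := by
  induction m with
  | zero => exact .of_finite
  | succ m ih =>
    have htail : Summable fun r : Fin m → α => ∏ j, f j.succ (r j) :=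
      ih (fun j => hf0 j.succ) fun j => hf j.succ
    have hprod := Summable.mul_of_nonneg (hf 0) htail (hf0 0) fun r =>
      prod_nonneg fun j _ => hf0 j.succ (r j)
    refine ((Fin.consEquiv fun _ => α).symm.summable_iff.mpr hprod).congr fun r => ?_
    rw [Fin.prod_univ_succ]
    rfl

section Noise

variable {q : ℕ} {ε : ℝ}

lemma geoPMF_eq (ε : ℝ) (k : ℕ) :
    geoPMF ε k = (1 - Real.exp (-ε / 2)) * Real.exp (-ε / 2) ^ k := by
  rw [geoPMF, ← Real.exp_nat_mul]
  ring_nf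

lemma summable_geoPMF (hε : 0 < ε) : Summable (geoPMF ε) := by
  simp only [funext (geoPMF_eq ε)]
  refine (summable_geometric_of_lt_one (Real.exp_pos _).le ?_).mul_left _
  rw [Real.exp_lt_one_iff]
  linarith

lemma geoPMF_nonneg (hε : 0 ≤ ε) (k : ℕ) : 0 ≤ geoPMF ε k := by
  rw [geoPMF_eq]
  have hle : Real.exp (-ε / 2) ≤ 1 := Real.exp_le_one_iff.mpr (by linarith)
  have hpos := Real.exp_pos (-ε / 2)
  positivity

lemma noisePMF_nonneg (hε : 0 ≤ ε) (r : Fin (q + 1) → ℕ) : 0 ≤ noisePMF ε r :=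
  prod_nonneg fun j _ => geoPMF_nonneg hε (r j)

lemma summable_noisePMF (hε : 0 < ε) : Summable (noisePMF (q := q) ε) :=
  summable_prod_apply_of_nonneg (fun _ => geoPMF_nonneg hε.le) fun _ => summable_geoPMF hε

lemma noisePMF_eq (ε : ℝ) (r : Fin (q + 1) → ℕ) :
    noisePMF ε r = (1 - Real.exp (-ε / 2)) ^ (q + 1) * Real.exp (-ε / 2) ^ ∑ j, r j := by
  simp [noisePMF, geoPMF_eq, prod_mul_distrib, prod_pow_eq_pow_sum]

lemma noisePMF_eq_exp_mul_noisePMF_add_single (ε : ℝ) (r : Fin (q + 1) → ℕ)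
    (c : Fin (q + 1)) :
    noisePMF ε r = Real.exp (ε / 2) * noisePMF ε (r + Pi.single c 1) := by
  have hexp : Real.exp (ε / 2) * Real.exp (-ε / 2) = 1 := by
    rw [← Real.exp_add, ← Real.exp_zero]
    ring_nf
  simp only [noisePMF_eq, Pi.add_apply, sum_add_distrib, sum_pi_single', mem_univ, if_true]
  linear_combination -(1 - Real.exp (-ε / 2)) ^ (q + 1) * Real.exp (-ε / 2) ^ (∑ j, r j) * hexp

end Noise

lemma tsum_le_mul_tsum_of_le_mul_comp {α : Type*} {F G : α → ℝ} {e : α → α}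
    (he : Function.Injective e) (hF : Summable F) (hG : Summable G) (hG0 : ∀ a, 0 ≤ G a)
    {K : ℝ} (hK : 0 ≤ K) (h : ∀ a, F a ≤ K * G (e a)) :
    ∑' a, F a ≤ K * ∑' a, G a := by
  rw [← tsum_mul_left]
  exact hF.tsum_le_tsum_of_inj e he (fun a _ => mul_nonneg hK (hG0 a)) h (hG.mul_left K)

section OutputProb

variable {q : ℕ} {ε : ℝ}

noncomputable def medianOutputProb (ε : ℝ) (z : Fin (q + 1) → ℕ) (j : Fin (q + 1)) : ℝ :=
  ∑' r, if Med (z + r) = j then noisePMF ε r else 0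

lemma ite_noisePMF_nonneg (hε : 0 ≤ ε) (p : Prop) [Decidable p] (r : Fin (q + 1) → ℕ) :
    0 ≤ if p then noisePMF ε r else 0 := by
  split_ifs
  exacts [noisePMF_nonneg hε r, le_rfl]

lemma summable_ite_noisePMF (hε : 0 < ε) (p : (Fin (q + 1) → ℕ) → Prop) [DecidablePred p] :
    Summable fun r => if p r then noisePMF ε r else 0 :=
  (summable_noisePMF hε).of_nonneg_of_le (fun r => ite_noisePMF_nonneg hε.le (p r) r)
    fun r => by split_ifs <;> simp [noisePMF_nonneg hε.le]

lemma medianOutputProb_add_single_le (hε : 0 < ε) (z : Fin (q + 1) → ℕ) (c j : Fin (q + 1)) :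
    medianOutputProb ε (z + Pi.single c 1) j ≤ Real.exp (ε / 2) * medianOutputProb ε z j := by
  refine tsum_le_mul_tsum_of_le_mul_comp (add_left_injective (Pi.single c 1))
    (summable_ite_noisePMF hε _) (summable_ite_noisePMF hε _)
    (fun r => ite_noisePMF_nonneg hε.le _ r) (Real.exp_pos _).le fun r => ?_
  rw [noisePMF_eq_exp_mul_noisePMF_add_single ε r c, add_right_comm z, add_assoc, mul_ite,
    mul_zero]

lemma medianOutputProb_le_add_single (hε : 0 < ε) (z : Fin (q + 1) → ℕ) (c j : Fin (q + 1)) :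
    medianOutputProb ε z j ≤ Real.exp (ε / 2) * medianOutputProb ε (z + Pi.single c 1) j := by
  refine tsum_le_mul_tsum_of_le_mul_comp (add_left_injective (Pi.single j 1))
    (summable_ite_noisePMF hε _) (summable_ite_noisePMF hε _)
    (fun r => ite_noisePMF_nonneg hε.le _ r) (Real.exp_pos _).le fun r => ?_
  by_cases hmed : Med (z + r) = j
  · have hshift : Med (z + Pi.single c 1 + (r + Pi.single j 1)) = j := by
      rw [← hmed, ← add_assoc, add_right_comm z]
      exact med_add_single_add_single_med (z + r) c
    rw [if_pos hmed, if_pos hshift, ← noisePMF_eq_exp_mul_noisePMF_add_single]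
  · rw [if_neg hmed]
    exact mul_nonneg (Real.exp_pos _).le (ite_noisePMF_nonneg hε.le _ _)

end OutputProb

lemma hist_update {n q : ℕ} (θ : Fin n → Fin (q + 1)) (i : Fin n) (s : Fin (q + 1)) :
    hist (Function.update θ i s)
      = (fun j => ((univ.erase i).filter (θ · = j)).card) + Pi.single s 1 := by
  funext j
  simp only [hist, Pi.add_apply, Pi.single_apply, card_filter]
  rw [← add_sum_erase _ _ (mem_univ i), Function.update_self, add_comm]
  congr 1
  · exact sum_congr rfl fun k hk => by rw [Function.update_of_ne (ne_of_mem_erase hk)]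
  · exact if_congr eq_comm rfl rfl

/-- the noisy-histogram median mechanism is ε-differentially private:
for any two report profiles differing in one player's report and any output location
`j*`, the probabilities of outputting `j*` differ by a factor of at most `e^ε`. -/
theorem stmt11 {n q : ℕ} (ε : ℝ) (hε : 0 < ε)
    (θ : Fin n → Fin (q + 1)) (i : Fin n) (t t' : Fin (q + 1)) (jstar : Fin (q + 1)) :
    (∑' r : Fin (q + 1) → ℕ,
        if Med (fun j => hist (Function.update θ i t) j + r j) = jstar
        then noisePMF ε r else 0)
      ≤ Real.exp ε *
        ∑' r : Fin (q + 1) → ℕ,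
          if Med (fun j => hist (Function.update θ i t') j + r j) = jstar
          then noisePMF ε r else 0 := by
  change medianOutputProb ε (hist (Function.update θ i t)) jstar
    ≤ Real.exp ε * medianOutputProb ε (hist (Function.update θ i t')) jstar
  rw [hist_update, hist_update]
  set others := fun j => ((univ.erase i).filter (θ · = j)).card
  set P := medianOutputProb ε (others + Pi.single t' 1) jstar
  calc medianOutputProb ε (others + Pi.single t 1) jstar
      ≤ Real.exp (ε / 2) * medianOutputProb ε others jstar :=
        medianOutputProb_add_single_le hε others t jstar
    _ ≤ Real.exp (ε / 2) * (Real.exp (ε / 2) * P) := by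
        gcongr
        exact medianOutputProb_le_add_single hε others t' jstar
    _ = Real.exp ε * P := by rw [← mul_assoc, ← Real.exp_add, add_halves]
end

section
/- In the noisy VCG mechanism, for every fixed noise r, if the selected outcomes under reports θ_i and θ_i' differ, then the truthful quasi-linear utility exceeds the misreport's utility by at least 1/|O|: Uo(θ_i, o*) − P(θ_i, outcome info) − (Uo(θ_i, o') − P(θ_i', outcome info)) ≥ 1/|O|. -/
/-!
Player `i`'s payment is `(Uo(θ_i, o*) − V_{o*}) + max_o W_o` with `W_o = V_o − Uo(θ_i, o)`,
and `W` does not depend on player `i`'s report. Hence the truthful utility is `V_{o*} − max W`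
and the utility of a misreport selecting `o'` is `V_{o'} − max W`; their difference is the
score gap `V_{o*} − V_{o'} ≥ 0`. The scores are integers shifted by `o/(m+1)`, so two distinct
outcomes never tie and the gap is at least `1/(m+1)`.
-/

open Finset

noncomputable def Vscore {Θ : Type*} {n m : ℕ} (Uo : Θ → Fin (m + 1) → ℕ)
    (lam : Fin (m + 1) → ℤ) (θ : Fin n → Θ) (o : Fin (m + 1)) : ℝ :=
  (∑ j, (Uo (θ j) o : ℝ)) + (lam o : ℝ) + (o : ℝ) / (m + 1 : ℝ)

noncomputable def payment {Θ : Type*} {m : ℕ} (Uo : Θ → Fin (m + 1) → ℕ)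
    (t : Θ) (V : Fin (m + 1) → ℝ) (ostar : Fin (m + 1)) : ℝ :=
  ⨆ o : Fin (m + 1), ((Uo t ostar : ℝ) - (Uo t o : ℝ) - (V ostar - V o))

section Scores

variable {Θ : Type*} {n m : ℕ} (Uo : Θ → Fin (m + 1) → ℕ) (lam : Fin (m + 1) → ℤ)
  (θ : Fin n → Θ)

lemma Vscore_eq_intCast_add (o : Fin (m + 1)) :
    Vscore Uo lam θ o = (((∑ j, (Uo (θ j) o : ℤ)) + lam o : ℤ) : ℝ) + o / (m + 1) := by
  push_cast
  rfl

lemma Vscore_update_sub (i : Fin n) (t : Θ) (o : Fin (m + 1)) :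
    Vscore Uo lam (Function.update θ i t) o - Uo t o = Vscore Uo lam θ o - Uo (θ i) o := by
  simp only [Vscore, ← add_sum_erase _ _ (mem_univ i), Function.update_self]
  rw [sum_congr rfl fun j hj => by rw [Function.update_of_ne (ne_of_mem_erase hj)]]
  ring

end Scores

section Payments

variable {Θ : Type*} {m : ℕ} (Uo : Θ → Fin (m + 1) → ℕ)

lemma payment_eq_add_iSup (t : Θ) (V : Fin (m + 1) → ℝ) (os : Fin (m + 1)) :
    payment Uo t V os = ((Uo t os : ℝ) - V os) + ⨆ o, (V o - (Uo t o : ℝ)) := by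
  rw [payment, add_ciSup (Set.finite_range _).bddAbove]
  congr 1 with o
  ring

lemma sub_payment_sub_sub_payment {t t' : Θ} {V V' : Fin (m + 1) → ℝ}
    (hW : ∀ o, V' o - Uo t' o = V o - Uo t o) (os o' : Fin (m + 1)) :
    ((Uo t os : ℝ) - payment Uo t V os) - ((Uo t o' : ℝ) - payment Uo t' V' o') =
      V os - V o' := by
  rw [payment_eq_add_iSup, payment_eq_add_iSup, funext hW]
  linarith [hW o']

end Payments

section TieBreaking

variable {m : ℕ} {p q : Fin (m + 1)}

lemma one_le_mul_add_sub_of_ne (hpq : p ≠ q) {d : ℤ} (h : 0 ≤ (m + 1) * d + p - q) :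
    1 ≤ (m + 1) * d + p - q := by
  have hp := p.isLt
  have hq := q.isLt
  have hpq' : (p : ℤ) ≠ q := by exact_mod_cast Fin.val_ne_of_ne hpq
  rcases lt_trichotomy d 0 with hd | rfl | hd
  · nlinarith
  · omega
  · nlinarith

lemma one_div_le_sub_of_ne (hpq : p ≠ q) {a b : ℤ}
    (h : (b : ℝ) + q / (m + 1) ≤ a + p / (m + 1)) :
    1 / (m + 1 : ℝ) ≤ (a + p / (m + 1)) - (b + q / (m + 1)) := by
  have hm : (0 : ℝ) < m + 1 := by positivity
  have hscale : (((m + 1) * (a - b) + p - q : ℤ) : ℝ) =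
      (m + 1) * ((a + p / (m + 1)) - (b + q / (m + 1))) := by
    push_cast
    field_simp
    ring
  rw [div_le_iff₀' hm, ← hscale]
  rw [← sub_nonneg, ← mul_nonneg_iff_of_pos_left hm, ← hscale] at h
  exact_mod_cast one_le_mul_add_sub_of_ne hpq (by exact_mod_cast h)

end TieBreaking

theorem stmt17_general {Θ : Type*} {n m : ℕ}
    (Uo : Θ → Fin (m + 1) → ℕ)
    (lam : Fin (m + 1) → ℤ) (θ : Fin n → Θ) (i : Fin n) (t' : Θ)
    (ostar o' : Fin (m + 1))
    (hstar : ∀ o, Vscore Uo lam θ o ≤ Vscore Uo lam θ ostar)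
    (hne : ostar ≠ o') :
    ((Uo (θ i) ostar : ℝ) - payment Uo (θ i) (Vscore Uo lam θ) ostar)
      - ((Uo (θ i) o' : ℝ)
          - payment Uo t' (Vscore Uo lam (Function.update θ i t')) o')
      ≥ 1 / (m + 1 : ℝ) := by
  rw [sub_payment_sub_sub_payment Uo (Vscore_update_sub Uo lam θ i t'), ge_iff_le]
  have hgap := hstar o'
  simp only [Vscore_eq_intCast_add] at hgap ⊢
  exact one_div_le_sub_of_ne hne hgap

/-- in the noisy VCG mechanism, for every fixed noise, if the selected
outcomes under reports `θ_i` and `θ_i'` differ, then the truthful quasi-linear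
utility exceeds the misreport's utility by at least `1/|O|`. -/
theorem stmt17 {Θ : Type*} {n m Mb : ℕ}
    (Uo : Θ → Fin (m + 1) → ℕ) (hUo : ∀ t o, Uo t o ≤ Mb)
    (lam : Fin (m + 1) → ℤ) (θ : Fin n → Θ) (i : Fin n) (t' : Θ)
    (ostar o' : Fin (m + 1))
    (hstar : ∀ o, Vscore Uo lam θ o ≤ Vscore Uo lam θ ostar)
    (hstar' : ∀ o, Vscore Uo lam (Function.update θ i t') o
        ≤ Vscore Uo lam (Function.update θ i t') o')
    (hne : ostar ≠ o') :
    ((Uo (θ i) ostar : ℝ) - payment Uo (θ i) (Vscore Uo lam θ) ostar)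
      - ((Uo (θ i) o' : ℝ)
          - payment Uo t' (Vscore Uo lam (Function.update θ i t')) o')
      ≥ 1 / (m + 1 : ℝ) :=
  stmt17_general Uo lam θ i t' ostar o' hstar hne
end

section
/- For the noisy VCG mechanism's output, for every profile θ and Δ > 0: Pr[Σ_i Uo(θ_i, o*) < max_{o'} Σ_i Uo(θ_i, o') − Δ] ≤ 2|O|·exp(−εΔ/(2M·|O|)), where o* is the selected outcome. -/
/-!
Let `o*` be the selected outcome and `o` a welfare-optimal one. Since `V_o ≤ V_{o*}` and the
tie-breaking terms lie in `[0, 1)`, integrality of welfare and noise gives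
`W(o) - W(o*) ≤ λ_{o*} - λ_o`. A shortfall larger than `Δ` therefore forces `|λ_o'| > Δ/2` for
some outcome `o'`. The noise coordinates are independent, so a union bound over the `|O|`
outcomes reduces the claim to the two-sided tail `Pr[|λ| > t] ≤ 2 exp(-εt/(M|O|))` of the
discrete Laplace distribution, which is a geometric series estimate.
-/

open Finset

noncomputable def argmaxV {m : ℕ} (V : Fin (m + 1) → ℝ) : Fin (m + 1) :=
  Classical.choose (Finset.exists_max_image Finset.univ V ⟨0, Finset.mem_univ 0⟩)

/-- Normalizing constant of the discrete two-sided Laplace distribution with scale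
`M·(m+1)/ε`. -/
noncomputable def lapZ (ε : ℝ) (Mb m : ℕ) : ℝ :=
  ∑' k : ℤ, Real.exp (-(ε * |(k : ℝ)|) / ((Mb : ℝ) * (m + 1 : ℝ)))

/-- The discrete two-sided Laplace pmf: `Pr[λ = k] ∝ exp(−ε|k|/(M·(m+1)))`. -/
noncomputable def lapVCG (ε : ℝ) (Mb m : ℕ) (k : ℤ) : ℝ :=
  Real.exp (-(ε * |(k : ℝ)|) / ((Mb : ℝ) * (m + 1 : ℝ))) / lapZ ε Mb m

lemma le_argmaxV {m : ℕ} (V : Fin (m + 1) → ℝ) (o : Fin (m + 1)) : V o ≤ V (argmaxV V) :=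
  (Classical.choose_spec (exists_max_image univ V ⟨0, mem_univ 0⟩)).2 o (mem_univ o)

/-- The tie-breaking term `o/(m+1)` lies in `[0, 1)`, so it cannot overturn an inequality
between integers. -/
lemma welfare_sub_le_noise_sub {Θ : Type*} {n m : ℕ} (Uo : Θ → Fin (m + 1) → ℕ)
    (lam : Fin (m + 1) → ℤ) (θ : Fin n → Θ) (o : Fin (m + 1)) :
    (∑ i, (Uo (θ i) o : ℝ)) - ∑ i, (Uo (θ i) (argmaxV (Vscore Uo lam θ)) : ℝ) ≤
      lam (argmaxV (Vscore Uo lam θ)) - lam o := by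
  set o' := argmaxV (Vscore Uo lam θ)
  have hV : Vscore Uo lam θ o ≤ Vscore Uo lam θ o' := le_argmaxV _ o
  have htie : ((o' : ℕ) : ℝ) / (m + 1) < 1 :=
    (div_lt_one (by positivity)).mpr (by exact_mod_cast o'.is_lt)
  have htie' : 0 ≤ ((o : ℕ) : ℝ) / (m + 1) := by positivity
  have hlt : ((∑ i, (Uo (θ i) o : ℤ)) - ∑ i, (Uo (θ i) o' : ℤ) : ℤ) < lam o' - lam o + 1 := by
    have : (((∑ i, (Uo (θ i) o : ℤ)) - ∑ i, (Uo (θ i) o' : ℤ) : ℤ) : ℝ) <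
        ((lam o' - lam o + 1 : ℤ) : ℝ) := by
      simp only [Vscore] at hV
      push_cast
      linarith
    exact_mod_cast this
  exact_mod_cast Int.lt_add_one_iff.mp hlt

lemma exists_half_lt_abs_of_welfare_lt {Θ : Type*} {n m : ℕ} (Uo : Θ → Fin (m + 1) → ℕ)
    (lam : Fin (m + 1) → ℤ) (θ : Fin n → Θ) {Δ : ℝ}
    (h : (∑ i, (Uo (θ i) (argmaxV (Vscore Uo lam θ)) : ℝ)) <
      (⨆ o : Fin (m + 1), ∑ i, (Uo (θ i) o : ℝ)) - Δ) :
    ∃ o, Δ / 2 < |(lam o : ℝ)| := by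
  obtain ⟨o, ho⟩ := exists_eq_ciSup_of_finite (f := fun o : Fin (m + 1) => ∑ i, (Uo (θ i) o : ℝ))
  have hgap := welfare_sub_le_noise_sub Uo lam θ o
  by_contra! hsmall
  have h₁ := abs_le.mp (hsmall (argmaxV (Vscore Uo lam θ)))
  have h₂ := abs_le.mp (hsmall o)
  linarith

lemma hasSum_fin_pi_prod {α : Type*} {N : ℕ} (g : Fin N → α → ℝ) (hg0 : ∀ i, 0 ≤ g i)
    (hg : ∀ i, Summable (g i)) :
    HasSum (fun f : Fin N → α => ∏ i, g i (f i)) (∏ i, ∑' a, g i a) := by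
  induction N with
  | zero => simp
  | succ N ih =>
    set tail : (Fin N → α) → ℝ := fun f => ∏ i : Fin N, g i.succ (f i)
    have htail : HasSum tail (∏ i : Fin N, ∑' a, g i.succ a) :=
      ih _ (fun i => hg0 _) (fun i => hg _)
    have hprod : Summable fun x : α × (Fin N → α) => g 0 x.1 * tail x.2 :=
      (hg 0).mul_of_nonneg htail.summable (hg0 0) fun f => prod_nonneg fun i _ => hg0 _ _
    have hcons : (fun f : Fin (N + 1) → α => ∏ i, g i (f i)) ∘ Fin.consEquiv (fun _ => α) =
        fun x => g 0 x.1 * tail x.2 := by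
      ext x
      simp [tail, Fin.prod_univ_succ, Fin.consEquiv]
    rw [← (Fin.consEquiv fun _ => α).hasSum_iff, hcons, Fin.prod_univ_succ]
    exact (hg 0).hasSum.mul htail hprod

lemma hasSum_pi_prod {ι α : Type*} [Fintype ι] (g : ι → α → ℝ) (hg0 : ∀ i, 0 ≤ g i)
    (hg : ∀ i, Summable (g i)) :
    HasSum (fun f : ι → α => ∏ i, g i (f i)) (∏ i, ∑' a, g i a) := by
  let e := Fintype.equivFin ι
  have h := hasSum_fin_pi_prod (fun j => g (e.symm j)) (fun j => hg0 _) (fun j => hg _)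
  rw [← (e.arrowCongr (Equiv.refl α)).symm.hasSum_iff]
  simp only [Function.comp_def, Equiv.arrowCongr_symm, Equiv.arrowCongr_apply]
  rw [Fintype.prod_equiv e _ (fun j => ∑' a, g (e.symm j) a) (by simp)]
  convert h using 2 with f
  exact Fintype.prod_equiv e _ _ (by simp)

lemma tsum_ite_prod_le_card_mul_tsum_indicator {ι α : Type*} [Fintype ι] {p : α → ℝ}
    (hp0 : 0 ≤ p) (hp : HasSum p 1) (S : Set α) (E : (ι → α) → Prop) [DecidablePred E]
    (hE : ∀ f, E f → ∃ i, f i ∈ S) :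
    ∑' f : ι → α, (if E f then ∏ i, p (f i) else 0) ≤
      Fintype.card ι * ∑' a, S.indicator p a := by
  classical
  -- `q i` is the product weight in which coordinate `i` is restricted to `S`.
  set q : ι → ι → α → ℝ := fun i j => if j = i then S.indicator p else p
  have hq0 : ∀ i j, 0 ≤ q i j := fun i j => by
    unfold q; split_ifs
    exacts [Set.indicator_nonneg (fun a _ => hp0 a), hp0]
  have hq : ∀ i j, Summable (q i j) := fun i j => by
    unfold q; split_ifs
    exacts [hp.summable.indicator S, hp.summable]
  have hq_sum : ∀ i, HasSum (fun f : ι → α => ∏ j, q i j (f j)) (∑' a, S.indicator p a) := by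
    intro i
    convert hasSum_pi_prod (q i) (hq0 i) (hq i) using 1
    rw [prod_eq_single i (fun j _ hj => by simp [q, hj, hp.tsum_eq]) (by simp)]
    simp [q]
  have hE_le : ∀ f : ι → α, (if E f then ∏ i, p (f i) else 0) ≤ ∑ i, ∏ j, q i j (f j) := by
    intro f
    split_ifs with hf
    · obtain ⟨i, hi⟩ := hE f hf
      calc ∏ j, p (f j) = ∏ j, q i j (f j) := prod_congr rfl fun j _ => by
            unfold q; split_ifs with hj
            · subst hj; exact (Set.indicator_of_mem hi p).symm
            · rfl
        _ ≤ ∑ i, ∏ j, q i j (f j) := single_le_sum (f := fun i => ∏ j, q i j (f j))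
            (fun i _ => prod_nonneg fun j _ => hq0 i j _) (mem_univ i)
    · exact sum_nonneg fun i _ => prod_nonneg fun j _ => hq0 i j _
  have hE_sum : Summable fun f : ι → α => if E f then ∏ i, p (f i) else 0 :=
    (hasSum_pi_prod _ (fun _ => hp0) fun _ => hp.summable).summable.of_nonneg_of_le
      (fun f => by split_ifs; exacts [prod_nonneg fun i _ => hp0 _, le_rfl])
      (fun f => by split_ifs; exacts [le_rfl, prod_nonneg fun i _ => hp0 _])
  calc ∑' f : ι → α, (if E f then ∏ i, p (f i) else 0)
      ≤ ∑' f : ι → α, ∑ i, ∏ j, q i j (f j) :=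
        hE_sum.tsum_le_tsum hE_le (summable_sum fun i _ => (hq_sum i).summable)
    _ = ∑ i : ι, ∑' a, S.indicator p a := by
        rw [Summable.tsum_finsetSum fun i _ => (hq_sum i).summable]
        exact sum_congr rfl fun i _ => (hq_sum i).tsum_eq
    _ = Fintype.card ι * ∑' a, S.indicator p a := by simp

lemma summable_exp_neg_mul_nat {c : ℝ} (hc : 0 < c) :
    Summable fun n : ℕ => Real.exp (-c * n) := by
  simpa [mul_comm] using Real.summable_exp_nat_mul_iff.mpr (neg_lt_zero.mpr hc)

lemma summable_ite_lt_exp_neg_mul_nat {c : ℝ} (hc : 0 < c) (t : ℝ) :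
    Summable fun n : ℕ => if t < n then Real.exp (-c * n) else 0 :=
  (summable_exp_neg_mul_nat hc).of_nonneg_of_le (fun n => by positivity)
    fun n => by split_ifs <;> simp [Real.exp_nonneg]

lemma tsum_ite_lt_exp_neg_mul_nat_le {c : ℝ} (hc : 0 < c) {t : ℝ} (ht : 0 ≤ t) :
    ∑' n : ℕ, (if t < n then Real.exp (-c * n) else 0) ≤
      Real.exp (-c * t) * ∑' n : ℕ, Real.exp (-c * n) := by
  set N := ⌊t⌋₊ + 1
  have htN : t < N := by simpa [N] using Nat.lt_floor_add_one t
  have hhead : ∑ i ∈ range N, (if t < i then Real.exp (-c * i) else 0) = 0 :=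
    sum_eq_zero fun i hi =>
      if_neg (not_lt.mpr ((Nat.le_floor_iff ht).mp (Nat.lt_succ_iff.mp (mem_range.mp hi))))
  have hshift : ∀ j : ℕ, (if t < ((j + N : ℕ) : ℝ) then Real.exp (-c * (j + N : ℕ)) else 0) =
      Real.exp (-c * N) * Real.exp (-c * j) := fun j => by
    rw [if_pos (htN.trans_le (by simp)), ← Real.exp_add]
    push_cast
    ring_nf
  rw [← (summable_ite_lt_exp_neg_mul_nat hc t).sum_add_tsum_nat_add N, hhead, zero_add,
    tsum_congr hshift, tsum_mul_left]
  refine mul_le_mul_of_nonneg_right (Real.exp_le_exp.mpr ?_) (tsum_nonneg fun n => by positivity)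
  exact mul_le_mul_of_nonpos_left htN.le (by linarith)

lemma summable_int_comp_natAbs {g : ℕ → ℝ} (hg : Summable g) :
    Summable fun k : ℤ => g k.natAbs :=
  Summable.of_nat_of_neg (by simpa using hg) (by simpa using hg)

lemma tsum_int_comp_natAbs {g : ℕ → ℝ} (hg : Summable g) :
    ∑' k : ℤ, g k.natAbs = 2 * ∑' n, g n - g 0 := by
  rw [Summable.tsum_of_nat_of_neg (by simpa using hg) (by simpa using hg)]
  simp only [Int.natAbs_natCast, Int.natAbs_neg, Int.natAbs_zero]
  ring

lemma summable_exp_neg_mul_abs {c : ℝ} (hc : 0 < c) :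
    Summable fun k : ℤ => Real.exp (-c * |(k : ℝ)|) := by
  simpa [Nat.cast_natAbs] using summable_int_comp_natAbs (summable_exp_neg_mul_nat hc)

lemma one_le_tsum_exp_neg_mul_abs {c : ℝ} (hc : 0 < c) :
    1 ≤ ∑' k : ℤ, Real.exp (-c * |(k : ℝ)|) := by
  simpa using (summable_exp_neg_mul_abs hc).le_tsum 0 fun k _ => (Real.exp_pos _).le

lemma tsum_indicator_exp_neg_mul_abs_le {c : ℝ} (hc : 0 < c) {t : ℝ} (ht : 0 ≤ t) :
    ∑' k : ℤ, {k : ℤ | t < |(k : ℝ)|}.indicator (fun k => Real.exp (-c * |(k : ℝ)|)) k ≤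
      2 * Real.exp (-c * t) * ∑' k : ℤ, Real.exp (-c * |(k : ℝ)|) := by
  set g : ℕ → ℝ := fun n => Real.exp (-c * n)
  set gt : ℕ → ℝ := fun n => if t < n then Real.exp (-c * n) else 0
  have hZ : ∑' k : ℤ, Real.exp (-c * |(k : ℝ)|) = 2 * ∑' n, g n - 1 := by
    simpa [g, Nat.cast_natAbs] using tsum_int_comp_natAbs (summable_exp_neg_mul_nat hc)
  have htail : ∑' k : ℤ, {k : ℤ | t < |(k : ℝ)|}.indicator (fun k => Real.exp (-c * |(k : ℝ)|)) k
      = 2 * ∑' n, gt n - gt 0 := by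
    simpa [gt, Set.indicator_apply, Nat.cast_natAbs] using
      tsum_int_comp_natAbs (summable_ite_lt_exp_neg_mul_nat hc t)
  have hg0 : 1 ≤ ∑' n, g n := by
    simpa [g] using (summable_exp_neg_mul_nat hc).le_tsum 0 fun n _ => (Real.exp_pos _).le
  have hgt0 : 0 ≤ gt 0 := by simp only [gt]; split_ifs <;> simp
  have hgt : ∑' n, gt n ≤ Real.exp (-c * t) * ∑' n, g n := tsum_ite_lt_exp_neg_mul_nat_le hc ht
  rw [htail, hZ]
  nlinarith [Real.exp_pos (-c * t)]

lemma lapVCG_eq (ε : ℝ) (Mb m : ℕ) (k : ℤ) :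
    lapVCG ε Mb m k = Real.exp (-(ε / (Mb * (m + 1))) * |(k : ℝ)|) /
      ∑' k : ℤ, Real.exp (-(ε / (Mb * (m + 1))) * |(k : ℝ)|) := by
  simp only [lapVCG, lapZ, neg_mul, neg_div, div_mul_eq_mul_div]

lemma lapVCG_nonneg (ε : ℝ) (Mb m : ℕ) : 0 ≤ lapVCG ε Mb m := fun _ =>
  div_nonneg (Real.exp_nonneg _) (tsum_nonneg fun _ => Real.exp_nonneg _)

lemma hasSum_lapVCG {ε : ℝ} (hε : 0 < ε) {Mb : ℕ} (hMb : 0 < Mb) (m : ℕ) :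
    HasSum (lapVCG ε Mb m) 1 := by
  set c : ℝ := ε / (Mb * (m + 1))
  have hc : 0 < c := by positivity
  have hZ := one_le_tsum_exp_neg_mul_abs hc
  have h := (summable_exp_neg_mul_abs hc).hasSum.div_const (∑' k : ℤ, Real.exp (-c * |(k : ℝ)|))
  rwa [div_self (zero_lt_one.trans_le hZ).ne', ← funext (lapVCG_eq ε Mb m)] at h

lemma tsum_indicator_lapVCG_le {ε : ℝ} (hε : 0 < ε) {Mb : ℕ} (hMb : 0 < Mb) (m : ℕ) {t : ℝ}
    (ht : 0 ≤ t) :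
    ∑' k : ℤ, {k : ℤ | t < |(k : ℝ)|}.indicator (lapVCG ε Mb m) k ≤
      2 * Real.exp (-(ε * t) / (Mb * (m + 1))) := by
  set c : ℝ := ε / (Mb * (m + 1))
  have hc : 0 < c := by positivity
  have hZ := one_le_tsum_exp_neg_mul_abs hc
  have hdiv : ∀ k : ℤ, {k : ℤ | t < |(k : ℝ)|}.indicator (lapVCG ε Mb m) k =
      {k : ℤ | t < |(k : ℝ)|}.indicator (fun k => Real.exp (-c * |(k : ℝ)|)) k /
        ∑' k : ℤ, Real.exp (-c * |(k : ℝ)|) := fun k => by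
    simp only [Set.indicator_apply, lapVCG_eq]
    split_ifs <;> simp [c]
  rw [tsum_congr hdiv, tsum_div_const, div_le_iff₀ (by linarith),
    show -(ε * t) / (Mb * (m + 1)) = -c * t by ring]
  exact tsum_indicator_exp_neg_mul_abs_le hc ht

theorem stmt19_general {Θ : Type*} {n m Mb : ℕ} (hMb : 0 < Mb)
    (Uo : Θ → Fin (m + 1) → ℕ)
    (ε : ℝ) (hε : 0 < ε) (θ : Fin n → Θ) (Δ : ℝ) (hΔ : 0 < Δ) :
    (∑' lam : Fin (m + 1) → ℤ,
        if (∑ i, (Uo (θ i) (argmaxV (Vscore Uo lam θ)) : ℝ))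
            < (⨆ o' : Fin (m + 1), ∑ i, (Uo (θ i) o' : ℝ)) - Δ
        then ∏ o, lapVCG ε Mb m (lam o) else 0)
      ≤ 2 * (m + 1 : ℝ) * Real.exp (-(ε * Δ) / (2 * (Mb : ℝ) * (m + 1 : ℝ))) := by
  calc _ ≤ (Fintype.card (Fin (m + 1)) : ℝ) *
          ∑' k : ℤ, {k : ℤ | Δ / 2 < |(k : ℝ)|}.indicator (lapVCG ε Mb m) k :=
        tsum_ite_prod_le_card_mul_tsum_indicator (lapVCG_nonneg ε Mb m) (hasSum_lapVCG hε hMb m)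
          _ _ fun lam => exists_half_lt_abs_of_welfare_lt Uo lam θ
    _ ≤ (Fintype.card (Fin (m + 1)) : ℝ) * (2 * Real.exp (-(ε * Δ) / (2 * Mb * (m + 1)))) := by
        gcongr
        refine (tsum_indicator_lapVCG_le hε hMb m (half_pos hΔ).le).trans_eq ?_
        congr 2
        field_simp
    _ = _ := by rw [Fintype.card_fin]; push_cast; ring

/-- for the noisy VCG mechanism (outcome set of size `m+1`, utilities
in `{0,…,M}`), for every profile `θ` and `Δ > 0`, the probability that the selected
outcome's welfare falls short of optimal by more than `Δ` is at most
`2·|O|·exp(−εΔ/(2M·|O|))`. -/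
theorem stmt19 {Θ : Type*} {n m Mb : ℕ} (hMb : 0 < Mb)
    (Uo : Θ → Fin (m + 1) → ℕ) (hUo : ∀ t o, Uo t o ≤ Mb)
    (ε : ℝ) (hε : 0 < ε) (θ : Fin n → Θ) (Δ : ℝ) (hΔ : 0 < Δ) :
    (∑' lam : Fin (m + 1) → ℤ,
        if (∑ i, (Uo (θ i) (argmaxV (Vscore Uo lam θ)) : ℝ))
            < (⨆ o' : Fin (m + 1), ∑ i, (Uo (θ i) o' : ℝ)) - Δ
        then ∏ o, lapVCG ε Mb m (lam o) else 0)
      ≤ 2 * (m + 1 : ℝ) * Real.exp (-(ε * Δ) / (2 * (Mb : ℝ) * (m + 1 : ℝ))) :=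
  stmt19_general hMb Uo ε hε θ Δ hΔ
end
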